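/- arXiv:1301.7689 — 2 statements merged into one kernel-verified Lean document; each statement's English description precedes it below -/
import Mathlib

section
/- Let p, q : ℕ → ℤ with min (p 0) (q 0) ≥ 2, q i ≥ 2 for all i, and |p i − p (i−1) · q (i−1) · q i| ≥ 2 for all i ≥ 1, and let m and B be defined from p and q as in the context. Then for every n and every g with 1 ≤ g ≤ n+1, one has B n (g−1) ≥ B n g + 2. (Thus the bridge spectrum of the iterated torus knot K_n has a gap at every index from 1 to n+1.) -/
/-- `bridgeMin p q i` is `m i`: `m 0 = min (p 0) (q 0)` and for `i ≥ 1`,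
`m i = min |p i − p (i−1) · q (i−1) · q i| (q i)`. -/
def bridgeMin (p q : ℕ → ℤ) : ℕ → ℤ
  | 0 => min (p 0) (q 0)
  | (i + 1) => min |p (i + 1) - p i * q i * q (i + 1)| (q (i + 1))

/-- `bridgeSpec p q n g` is `B n g`, the (conjectural) genus-`g` bridge number of
the iterated torus knot `K_n`. -/
def bridgeSpec (p q : ℕ → ℤ) : ℕ → ℕ → ℤ
  | 0, 0 => bridgeMin p q 0
  | 0, _ + 1 => 0
  | (n + 1), g =>
      if g < n + 1 then q (n + 1) * bridgeSpec p q n g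
      else if g = n + 1 then bridgeMin p q (n + 1)
      else 0

lemma bridgeMin_ge (p q : ℕ → ℤ)
    (hpq0 : 2 ≤ min (p 0) (q 0))
    (hq : ∀ i, 2 ≤ q i)
    (hΔ : ∀ i ≥ 1, 2 ≤ |p i - p (i - 1) * q (i - 1) * q i|) (i : ℕ) :
    2 ≤ bridgeMin p q i := by
  cases i with
  | zero => exact hpq0
  | succ j =>
    have h := hΔ (j + 1) (Nat.le_add_left 1 j)
    simp only [Nat.add_sub_cancel] at h
    exact le_min h (hq (j + 1))

theorem bridgeSpec_gap (p q : ℕ → ℤ)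
    (hpq0 : 2 ≤ min (p 0) (q 0))
    (hq : ∀ i, 2 ≤ q i)
    (hΔ : ∀ i ≥ 1, 2 ≤ |p i - p (i - 1) * q (i - 1) * q i|)
    (n g : ℕ) (hg1 : 1 ≤ g) (hgn : g ≤ n + 1) :
    bridgeSpec p q n g + 2 ≤ bridgeSpec p q n (g - 1) := by
  induction n generalizing g with
  | zero =>
    interval_cases g
    simpa [bridgeSpec] using bridgeMin_ge p q hpq0 hq hΔ 0
  | succ n ih =>
    have hm := bridgeMin_ge p q hpq0 hq hΔ
    rcases Nat.lt_or_ge g (n + 1) with hlt | hge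
    · -- g ≤ n, so g - 1 < n + 1 too
      obtain ⟨g', rfl⟩ := Nat.exists_eq_add_of_le hg1
      have h1 : 1 + g' - 1 = g' := by omega
      have hg'lt : g' < n + 1 := by omega
      have ihh := ih (1 + g') hg1 (by omega)
      rw [h1] at ihh ⊢
      simp only [bridgeSpec, if_pos hlt, if_pos hg'lt]
      have hq' := hq (n + 1)
      nlinarith [ihh]
    · rcases Nat.lt_or_ge g (n + 2) with hlt2 | hge2
      · -- g = n + 1
        have hg : g = n + 1 := by omega
        subst hg
        simp only [bridgeSpec, Nat.add_sub_cancel, lt_irrefl, if_false, if_pos rfl,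
          if_pos (Nat.lt_succ_self n), if_true]
        -- need q (n+1) * B n n + ... : B n n
        have hBnn : bridgeSpec p q n n = bridgeMin p q n := by
          cases n with
          | zero => simp [bridgeSpec]
          | succ k => simp [bridgeSpec]
        rw [hBnn]
        have h1 : bridgeMin p q (n + 1) ≤ q (n + 1) := min_le_right _ _
        have h2 := hm n
        have h3 := hq (n + 1)
        nlinarith
      · -- g ≥ n + 2, so g = n + 2 by hgn
        have hg : g = n + 2 := by omega
        subst hg
        have h1 : n + 2 - 1 = n + 1 := rfl
        rw [h1]
        simp only [bridgeSpec]
        norm_num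
        exact hm (n + 1)
end

section
/- Let p, q : ℕ → ℤ with min (p 0) (q 0) ≥ 2, q i ≥ 2 for all i, and |p i − p (i−1) · q (i−1) · q i| ≥ 2 for all i ≥ 1, and let m and B be defined from p and q as in the context. Then for every n and every g, B n g > 0 if and only if g ≤ n. (Thus n+1 is the smallest genus in which the bridge number of the iterated torus knot K_n vanishes, i.e. the h-genus of K_n is n+1.) -/
theorem bridgeSpec_pos_iff (p q : ℕ → ℤ)
    (hpq0 : 2 ≤ min (p 0) (q 0))
    (hq : ∀ i, 2 ≤ q i)
    (hΔ : ∀ i ≥ 1, 2 ≤ |p i - p (i - 1) * q (i - 1) * q i|)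
    (n g : ℕ) :
    0 < bridgeSpec p q n g ↔ g ≤ n := by
  have hm : ∀ i, 0 < bridgeMin p q i := by
    intro i
    cases i with
    | zero => exact lt_of_lt_of_le (by norm_num) hpq0
    | succ j =>
      have h1 := hΔ (j + 1) (Nat.le_add_left 1 j)
      simp only [Nat.add_sub_cancel] at h1
      have := hq (j + 1)
      simp only [bridgeMin, lt_min_iff]
      omega
  induction n generalizing g with
  | zero =>
    cases g with
    | zero => simpa [bridgeSpec] using hm 0
    | succ k => simp [bridgeSpec]
  | succ n ih =>
    by_cases h1 : g < n + 1
    · simp only [bridgeSpec, if_pos h1]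
      constructor
      · intro _; omega
      · intro _
        exact mul_pos (lt_of_lt_of_le (by norm_num) (hq (n + 1)))
          ((ih g).mpr (by omega))
    · by_cases h2 : g = n + 1
      · simp only [bridgeSpec, if_neg h1, if_pos h2]
        exact ⟨fun _ => by omega, fun _ => hm (n + 1)⟩
      · simp only [bridgeSpec, if_neg h1, if_neg h2]
        exact ⟨fun h => absurd h (lt_irrefl 0), fun h => by omega⟩
end
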